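/- arXiv:1707.07760 — 4 statements merged into one kernel-verified Lean document; each statement's English description precedes it below -/
import Mathlib

section
/- If X is a proper metric space with a countable dense subset {x_i}, then the map g : X → ℝ^ℕ (with the product topology) defined by g(x)_i = d(x_i, x) is a closed embedding of X into ℝ^ℕ. -/
/-!
The map is continuous, and injective because some `x_i` lies within `d(x, y) / 2` of `x`, which
separates `d(x_i, x)` from `d(x_i, y)`. It is also proper: a compact `K ⊆ ℝ^ℕ` has bounded
`i`-th coordinate, so its preimage is a closed subset of a closed ball around `x_i`, hence
compact. Since `ℝ^ℕ` is metrizable, hence compactly generated, a proper map into it is closed.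
-/

open Metric Topology

section DistPi

variable {ι X : Type*}

theorem continuous_dist_pi [PseudoMetricSpace X] (u : ι → X) :
    Continuous fun x : X => fun i => dist (u i) x :=
  continuous_pi fun _ => continuous_const.dist continuous_id

theorem DenseRange.injective_dist_pi [MetricSpace X] {u : ι → X} (hu : DenseRange u) :
    Function.Injective fun x : X => fun i => dist (u i) x := by
  intro x y hxy
  by_contra hne
  obtain ⟨i, hi⟩ := denseRange_iff.mp hu x (dist x y / 2) (half_pos (dist_pos.mpr hne))
  have hxi : dist (u i) x = dist (u i) y := congrFun hxy i
  have := dist_triangle_left x y (u i)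
  rw [dist_comm] at hi
  linarith

theorem isCompact_preimage_dist_pi [PseudoMetricSpace X] [ProperSpace X] (u : ι → X)
    {K : Set (ι → ℝ)} (hK : IsCompact K) (i : ι) :
    IsCompact ((fun x : X => fun i => dist (u i) x) ⁻¹' K) := by
  obtain ⟨R, hR⟩ := hK.bddAbove_image (continuous_apply i).continuousOn
  refine (isCompact_closedBall (u i) R).of_isClosed_subset
    (hK.isClosed.preimage (continuous_dist_pi u)) fun x hx => ?_
  rw [mem_closedBall, dist_comm]
  exact hR ⟨_, hx, rfl⟩

theorem DenseRange.isProperMap_dist_pi [Countable ι] [PseudoMetricSpace X] [ProperSpace X]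
    {u : ι → X} (hu : DenseRange u) :
    IsProperMap fun x : X => fun i => dist (u i) x := by
  refine isProperMap_iff_isCompact_preimage.mpr ⟨continuous_dist_pi u, fun K hK => ?_⟩
  rcases isEmpty_or_nonempty X with _ | _
  · exact Set.toFinite _ |>.isCompact
  · obtain ⟨i⟩ := hu.nonempty
    exact isCompact_preimage_dist_pi u hK i

theorem DenseRange.isClosedEmbedding_dist_pi [Countable ι] [MetricSpace X] [ProperSpace X]
    {u : ι → X} (hu : DenseRange u) :
    IsClosedEmbedding fun x : X => fun i => dist (u i) x :=
  .of_continuous_injective_isClosedMap (continuous_dist_pi u) hu.injective_dist_pi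
    hu.isProperMap_dist_pi.isClosedMap

end DistPi

/-- If `X` is a proper metric space with a countable dense subset `{x_i}`, then
`g : X → ℝ^ℕ`, `g(x)_i = d(x_i, x)`, is a closed embedding (product topology on `ℝ^ℕ`). -/
theorem stmt1 (X : Type*) [MetricSpace X]
    (hproper : ∀ (x : X) (r : ℝ), IsCompact (Metric.closedBall x r))
    (u : ℕ → X) (hu : DenseRange u) :
    Topology.IsClosedEmbedding (fun x : X => fun i : ℕ => dist (u i) x) :=
  haveI : ProperSpace X := ⟨hproper⟩
  hu.isClosedEmbedding_dist_pi
end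

section
/- If Y is a separable metrizable space and Ȳ is a compact Hausdorff compactification of Y such that Z = Ȳ \ Y is a Z-set in Ȳ (witnessed by a homotopy H with H₀ = id and H_t(Ȳ) ⊆ Y for t > 0), then Ȳ is metrizable and separable. -/
/-!
For `t > 0` the maps `H_t` land in the metrizable space `Y`, and since `H_t → id` as `t → 0`,
countably many of them (`t = tₙ → 0`) already separate the points of `Ȳ`. A compact space with a
countable separating family of continuous maps into metric spaces embeds into their product, so it
is metrizable; and a compact metrizable space is separable.
-/

open unitInterval Topology Filter TopologicalSpace

theorem ContinuousMap.eq_of_forall_apply_seq_eq {X Z : Type*} [TopologicalSpace X]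
    [TopologicalSpace Z] [T2Space Z] (H : C(X × I, Z)) {u : ℕ → I}
    (hu : Tendsto u atTop (𝓝 0)) {x y : X} (hxy : ∀ n, H (x, u n) = H (y, u n)) :
    H (x, 0) = H (y, 0) := by
  have hlim : ∀ z, Tendsto (fun n => H (z, u n)) atTop (𝓝 (H (z, 0))) := fun z =>
    ((H.continuous.comp (Continuous.prodMk_right z)).tendsto 0).comp hu
  exact tendsto_nhds_unique (hlim x) (by simpa only [hxy] using hlim y)

theorem stmt5_general (Ybar : Type*) [TopologicalSpace Ybar] [CompactSpace Ybar] [T2Space Ybar]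
    (Y : Set Ybar)
    (hmet : TopologicalSpace.MetrizableSpace Y)
    (H : C(Ybar × I, Ybar))
    (h0 : ∀ y : Ybar, H (y, 0) = y)
    (ht : ∀ (y : Ybar) (t : I), 0 < t → H (y, t) ∈ Y) :
    TopologicalSpace.MetrizableSpace Ybar ∧ TopologicalSpace.SeparableSpace Ybar := by
  let : MetricSpace Y := metrizableSpaceMetric Y
  obtain ⟨u, -, hu_mem, hu_lim⟩ : ∃ u : ℕ → I, StrictAnti u ∧ (∀ n, u n ∈ Set.Ioo 0 1) ∧
      Tendsto u atTop (𝓝 0) :=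
    exists_seq_strictAnti_tendsto' zero_lt_one
  let f (n : ℕ) (x : Ybar) : Y := ⟨H (x, u n), ht x (u n) (hu_mem n).1⟩
  have hf : ∀ n, Continuous (f n) := fun n => by fun_prop
  have hsep : Pairwise fun x y => ∃ n, f n x ≠ f n y := fun x y hxy => by
    by_contra! hfxy
    exact hxy <| by
      simpa only [h0] using H.eq_of_forall_apply_seq_eq hu_lim fun n => congrArg Subtype.val (hfxy n)
  have : MetrizableSpace Ybar :=
    Metric.PiNatEmbed.TopologicalSpace.MetrizableSpace.of_countable_separating f hf hsep
  exact ⟨this, inferInstance⟩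

/-- If `Ȳ` is a compact Hausdorff compactification of a separable metrizable space `Y`
(i.e. `Y` is dense in `Ȳ`) and `Z = Ȳ \ Y` is a Z-set in `Ȳ` (witnessed by a homotopy
`H` with `H₀ = id` and `H_t(Ȳ) ⊆ Y` for `t > 0`), then `Ȳ` is metrizable and separable. -/
theorem stmt5 (Ybar : Type*) [TopologicalSpace Ybar] [CompactSpace Ybar] [T2Space Ybar]
    (Y : Set Ybar) (hdense : Dense Y)
    (hmet : TopologicalSpace.MetrizableSpace Y)
    (hsep : TopologicalSpace.SeparableSpace Y)
    (H : C(Ybar × I, Ybar))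
    (h0 : ∀ y : Ybar, H (y, 0) = y)
    (ht : ∀ (y : Ybar) (t : I), 0 < t → H (y, t) ∈ Y) :
    TopologicalSpace.MetrizableSpace Ybar ∧ TopologicalSpace.SeparableSpace Ybar :=
  stmt5_general Ybar Y hmet H h0 ht
end

section
/- If a group G acts geometrically (properly, cocompactly, by isometries) on a contractible proper metric space X, then X is uniformly contractible: for each R > 0 there exists S > R such that every open ball B(x,R) is null-homotopic inside B(x,S). -/
/-!
A contraction `H` of `X` moves the compact set `I × cthickening R K` through a bounded region,
where `K` is a compact set whose translates cover `X`. Conjugating `H` by an isometry `g` with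
`x ∈ g • K` gives a contraction of `X` that moves `B(x, R)` within `B(x, S)`, for one `S`
depending only on `R`.
-/

open Pointwise Metric Set ContinuousMap

namespace ContinuousMap.Homotopy

variable {X : Type*} [TopologicalSpace X] {y : X}

def conjHomeomorph (H : Homotopy (ContinuousMap.id X) (const X y)) (e : X ≃ₜ X) :
    Homotopy (ContinuousMap.id X) (const X (e y)) where
  toFun p := e (H (p.1, e.symm p.2))
  continuous_toFun := by fun_prop
  map_zero_left := by simp
  map_one_left := by simp

theorem homotopic_inclusion_const (H : Homotopy (ContinuousMap.id X) (const X y))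
    {A B : Set X} (hAB : A ⊆ B) (hy : y ∈ B) (hH : ∀ t, ∀ a ∈ A, H (t, a) ∈ B) :
    Homotopic ⟨inclusion hAB, continuous_inclusion hAB⟩ (const A ⟨y, hy⟩) :=
  ⟨{ toFun := fun p => ⟨H (p.1, p.2), hH p.1 p.2 p.2.2⟩
     continuous_toFun := by fun_prop
     map_zero_left := fun a => Subtype.ext (H.apply_zero a)
     map_one_left := fun a => Subtype.ext (H.apply_one a) }⟩

end ContinuousMap.Homotopy

theorem exists_forall_mem_ball_of_continuous {T X : Type*} [TopologicalSpace T] [CompactSpace T]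
    [PseudoMetricSpace X] [ProperSpace X] {f : T × X → X} (hf : Continuous f) {K : Set X}
    (hK : IsCompact K) (R : ℝ) :
    ∃ S, R < S ∧ ∀ k ∈ K, ∀ q ∈ ball k R, ∀ t, f (t, q) ∈ ball k S := by
  set C := f '' (univ ×ˢ cthickening R K) ∪ K
  have hC : Bornology.IsBounded C :=
    ((isCompact_univ.prod hK.cthickening).image hf).isBounded.union hK.isBounded
  refine ⟨max (diam C) R + 1, by linarith [le_max_right (diam C) R], fun k hk q hq t => ?_⟩
  have hq : q ∈ cthickening R K := mem_cthickening_of_dist_le q k R K hk (mem_ball.1 hq).le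
  calc dist (f (t, q)) k ≤ diam C :=
        dist_le_diam_of_mem hC (.inl ⟨(t, q), ⟨trivial, hq⟩, rfl⟩) (.inr hk)
    _ < max (diam C) R + 1 := by linarith [le_max_left (diam C) R]

theorem stmt12_general {G X : Type*} [Group G] [MetricSpace X] [MulAction G X]
    (hiso : ∀ (g : G) (x y : X), dist (g • x) (g • y) = dist x y)
    (hproperX : ∀ (x : X) (r : ℝ), IsCompact (Metric.closedBall x r))
    (hcocompact : ∃ K : Set X, IsCompact K ∧ ⋃ g : G, g • K = Set.univ)
    (hcontr : ContractibleSpace X) :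
    ∀ R > (0 : ℝ), ∃ S : ℝ, ∃ hRS : R < S, ∀ x : X,
      ∃ c : Metric.ball x S,
        ContinuousMap.Homotopic
          ⟨Set.inclusion (Metric.ball_subset_ball hRS.le),
            continuous_inclusion (Metric.ball_subset_ball hRS.le)⟩
          (ContinuousMap.const (Metric.ball x R) c) := by
  intro R hR
  have : ProperSpace X := ⟨hproperX⟩
  have : IsIsometricSMul G X := ⟨fun g => Isometry.of_dist_eq (hiso g)⟩
  obtain ⟨y, ⟨H⟩⟩ := id_nullhomotopic X
  obtain ⟨K, hK, hKcover⟩ := hcocompact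
  obtain ⟨S, hRS, hS⟩ := exists_forall_mem_ball_of_continuous H.continuous hK R
  refine ⟨S, hRS, fun x => ?_⟩
  obtain ⟨_, ⟨g, rfl⟩, k, hk, rfl⟩ : x ∈ ⋃ g : G, g • K := hKcover ▸ mem_univ x
  have hball : ∀ r, ∀ p, g • p ∈ ball (g • k) r ↔ p ∈ ball k r := fun r p => by
    simp only [mem_ball, dist_smul]
  have hy : g • y ∈ ball (g • k) S := by
    simpa only [hball, H.apply_one, const_apply] using hS k hk k (mem_ball_self hR) 1
  refine ⟨⟨g • y, hy⟩, (H.conjHomeomorph (IsometryEquiv.constSMul g).toHomeomorph)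
    |>.homotopic_inclusion_const (ball_subset_ball hRS.le) hy fun t a ha => ?_⟩
  rw [← smul_inv_smul g a, hball] at ha
  change g • H (t, g⁻¹ • a) ∈ _
  exact (hball S _).2 (hS k hk _ ha t)

/-- If `G` acts geometrically (properly, cocompactly, by isometries) on a contractible
proper metric space `X`, then `X` is uniformly contractible: for each `R > 0` there is
`S > R` such that every ball `B(x,R)` is null-homotopic in `B(x,S)`. -/
theorem stmt12 {G X : Type*} [Group G] [MetricSpace X] [MulAction G X]
    (hiso : ∀ (g : G) (x y : X), dist (g • x) (g • y) = dist x y)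
    (hproperX : ∀ (x : X) (r : ℝ), IsCompact (Metric.closedBall x r))
    (hcocompact : ∃ K : Set X, IsCompact K ∧ ⋃ g : G, g • K = Set.univ)
    (hproper : ∀ K : Set X, IsCompact K → {g : G | (g • K ∩ K).Nonempty}.Finite)
    (hcontr : ContractibleSpace X) :
    ∀ R > (0 : ℝ), ∃ S : ℝ, ∃ hRS : R < S, ∀ x : X,
      ∃ c : Metric.ball x S,
        ContinuousMap.Homotopic
          ⟨Set.inclusion (Metric.ball_subset_ball hRS.le),
            continuous_inclusion (Metric.ball_subset_ball hRS.le)⟩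
          (ContinuousMap.const (Metric.ball x R) c) :=
  stmt12_general hiso hproperX hcocompact hcontr
end

section
/- Suppose a group G acts on a proper metric space X by isometries, properly, and cocompactly, and suppose X̄ = X ∪ Z is a controlled Z-compactification of X. Then X̄ satisfies the nullity condition: for every compact C ⊆ X and every open cover 𝒰 of X̄, all but finitely many G-translates gC lie in some element of 𝒰. -/
open unitInterval Pointwise

/-- If `G` acts geometrically on a proper metric space `X` and `X̄ = X ∪ Z` is a
controlled Z-compactification of `X` (realized by a dense embedding `e : X → X̄` into a
compact metric space with Z-set complement), then the nullity condition holds: for every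
compact `C ⊆ X` and every open cover `𝒰` of `X̄`, all but finitely many translates `gC`
lie in some element of `𝒰`. -/
theorem stmt17 {G X Xbar : Type*} [Group G] [MetricSpace X] [MulAction G X]
    [MetricSpace Xbar] [CompactSpace Xbar]
    (hiso : ∀ (g : G) (x y : X), dist (g • x) (g • y) = dist x y)
    (hproperX : ∀ (x : X) (r : ℝ), IsCompact (Metric.closedBall x r))
    (hcocompact : ∃ K : Set X, IsCompact K ∧ ⋃ g : G, g • K = Set.univ)
    (hproper : ∀ K : Set X, IsCompact K → {g : G | (g • K ∩ K).Nonempty}.Finite)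
    (e : X → Xbar) (he : Topology.IsEmbedding e) (hdense : DenseRange e)
    (H : C(Xbar × I, Xbar))
    (h0 : ∀ y : Xbar, H (y, 0) = y)
    (ht : ∀ (y : Xbar) (t : I), 0 < t → H (y, t) ∈ Set.range e)
    (hcontrol : ∀ R > (0 : ℝ), ∀ 𝒰 : Set (Set Xbar), (∀ U ∈ 𝒰, IsOpen U) →
      ⋃₀ 𝒰 = Set.univ → ∃ K : Set X, IsCompact K ∧
        ∀ A : Set X, A ⊆ Kᶜ → Bornology.IsBounded A → Metric.diam A < R → ∃ U ∈ 𝒰, e '' A ⊆ U) :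
    ∀ C : Set X, IsCompact C → ∀ 𝒰 : Set (Set Xbar), (∀ U ∈ 𝒰, IsOpen U) →
      ⋃₀ 𝒰 = Set.univ →
      {g : G | ¬ ∃ U ∈ 𝒰, e '' (g • C) ⊆ U}.Finite := by
  intro C hC 𝒰 hopen hcover
  obtain ⟨K, hK, hKU⟩ := hcontrol (Metric.diam C + 1)
    (by positivity) 𝒰 hopen hcover
  have hK' : IsCompact (C ∪ K) := hC.union hK
  apply (hproper (C ∪ K) hK').subset
  intro g hg
  simp only [Set.mem_setOf_eq] at hg ⊢
  -- show g • C meets K, otherwise hKU applies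
  by_contra hne
  apply hg
  have hdisj : g • C ⊆ Kᶜ := by
    intro x hx hxK
    exact hne ⟨x, Set.smul_set_mono Set.subset_union_left hx,
      Set.subset_union_right hxK⟩
  have hisog : Isometry (fun x : X => g • x) := by
    intro x y
    rw [edist_dist, edist_dist, hiso]
  have hdiam : Metric.diam (g • C) = Metric.diam C := by
    have : g • C = (fun x : X => g • x) '' C := rfl
    rw [this, hisog.diam_image]
  exact hKU (g • C) hdisj (by have : g • C = (fun x : X => g • x) '' C := rfl; rw [this]; exact (hC.image hisog.continuous).isBounded) (by rw [hdiam]; linarith [Metric.diam_nonneg (s := C)])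
end
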